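/- arXiv:2503.14963 — 9 statements merged into one kernel-verified Lean document; each statement's English description precedes it below -/
import Mathlib

section
/- Let P and P' be real d×d orthogonal projectors, i.e. Pᵀ = P, P² = P, P'ᵀ = P', P'² = P'. Fix a real d×d matrix W̃. Then Y = W̃ minimizes the Frobenius distance of Y − P' Y P to W̃ over all d×d matrices Y; that is, for every real d×d matrix Y, ‖(W̃ − P' W̃ P) − W̃‖_F ≤ ‖(Y − P' Y P) − W̃‖_F, equivalently ‖P' W̃ P‖_F ≤ ‖Y − P' Y P − W̃‖_F. Hence W̄ := W̃ − P' W̃ P is the closest element to W̃ in the set { Y − P' Y P : Y ∈ ℝ^{d×d} }. (Optimality part of Theorem 1.) -/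
open Matrix

/-- The Frobenius norm of a real matrix: the square root of the sum of the
squares of its entries. -/
noncomputable def frobNorm {a b : ℕ} (M : Matrix (Fin a) (Fin b) ℝ) : ℝ :=
  Real.sqrt (∑ i, ∑ j, (M i j) ^ 2)

section aux

variable {d : ℕ}

/-- Frobenius inner product via trace. -/
noncomputable def fip (A B : Matrix (Fin d) (Fin d) ℝ) : ℝ := (Aᵀ * B).trace

lemma fip_eq_sum (A B : Matrix (Fin d) (Fin d) ℝ) :
    fip A B = ∑ i, ∑ j, A i j * B i j := by
  simp [fip, Matrix.trace, Matrix.mul_apply, Matrix.diag, Matrix.transpose_apply]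
  rw [Finset.sum_comm]

lemma fip_self (A : Matrix (Fin d) (Fin d) ℝ) :
    fip A A = ∑ i, ∑ j, (A i j) ^ 2 := by
  rw [fip_eq_sum]; simp [sq]

lemma fip_adj (P P' : Matrix (Fin d) (Fin d) ℝ)
    (hPsymm : Pᵀ = P) (hP'symm : P'ᵀ = P')
    (A B : Matrix (Fin d) (Fin d) ℝ) :
    fip (P' * A * P) B = fip A (P' * B * P) := by
  unfold fip
  rw [Matrix.transpose_mul, Matrix.transpose_mul, hPsymm, hP'symm]
  simp only [Matrix.mul_assoc]
  rw [Matrix.trace_mul_comm P]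
  simp only [Matrix.mul_assoc]

lemma fip_nonneg_self (A : Matrix (Fin d) (Fin d) ℝ) : 0 ≤ fip A A := by
  rw [fip_self]
  positivity

lemma key (P P' : Matrix (Fin d) (Fin d) ℝ)
    (hPsymm : Pᵀ = P) (hPidem : P * P = P)
    (hP'symm : P'ᵀ = P') (hP'idem : P' * P' = P')
    (M : Matrix (Fin d) (Fin d) ℝ) :
    frobNorm (P' * M * P) ≤ frobNorm M := by
  set A := P' * M * P with hA
  have hAA : fip A A = fip M A := by
    rw [hA, fip_adj P P' hPsymm hP'symm]
    congr 1
    calc P' * (P' * M * P) * P = (P' * P') * M * (P * P) := by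
          simp only [Matrix.mul_assoc]
    _ = P' * M * P := by rw [hPidem, hP'idem]
  have hMA : fip M A = fip A M := by
    rw [fip_eq_sum, fip_eq_sum]
    simp [mul_comm]
  have hsub : fip (M - A) (M - A) = fip M M - 2 * fip M A + fip A A := by
    simp only [fip_eq_sum]
    rw [Finset.mul_sum, ← Finset.sum_sub_distrib, ← Finset.sum_add_distrib]
    apply Finset.sum_congr rfl; intro i _
    rw [Finset.mul_sum, ← Finset.sum_sub_distrib, ← Finset.sum_add_distrib]
    apply Finset.sum_congr rfl; intro j _
    simp [Matrix.sub_apply]; ring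
  have h0 : 0 ≤ fip (M - A) (M - A) := fip_nonneg_self _
  have : fip A A ≤ fip M M := by
    rw [hsub, hAA] at h0
    linarith
  unfold frobNorm
  apply Real.sqrt_le_sqrt
  rw [← fip_self, ← fip_self]
  exact this

end aux

/-- **Optimality part of Theorem 1.** For orthogonal projectors `P`, `P'` and a fixed
matrix `Wtil`, the choice `Y = Wtil` minimizes `‖(Y − P' Y P) − Wtil‖_F`; equivalently, for every `Y`,
`‖(Wtil − P' Wtil P) − Wtil‖_F ≤ ‖(Y − P' Y P) − Wtil‖_F`. -/
theorem projection_is_closest_point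
    {d : ℕ} (P P' Wtil : Matrix (Fin d) (Fin d) ℝ)
    (hPsymm : Pᵀ = P) (hPidem : P * P = P)
    (hP'symm : P'ᵀ = P') (hP'idem : P' * P' = P') :
    ∀ Y : Matrix (Fin d) (Fin d) ℝ,
      frobNorm ((Wtil - P' * Wtil * P) - Wtil) ≤ frobNorm ((Y - P' * Y * P) - Wtil) := by
  intro Y
  set Z := Y - P' * Y * P - Wtil with hZ
  have hPZ : P' * Z * P = -(P' * Wtil * P) := by
    rw [hZ]
    have : P' * (P' * Y * P) * P = (P' * P') * Y * (P * P) := by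
      simp only [Matrix.mul_assoc]
    rw [Matrix.mul_sub, Matrix.mul_sub, Matrix.sub_mul, Matrix.sub_mul, this,
      hPidem, hP'idem]
    abel
  have h1 : (Wtil - P' * Wtil * P) - Wtil = P' * Z * P := by
    rw [hPZ]; abel
  rw [h1]
  exact key P P' hPsymm hPidem hP'symm hP'idem Z
end

section
/- Let A be a real m×k matrix, B a real l×n matrix, X₀ a real k×n matrix, Y₀ a real m×l matrix, P a real n×n matrix, and P' a real m×m matrix. Let A⁺ (k×m) and B⁺ (n×l) satisfy A A⁺ A = A and B B⁺ B = B. Assume the range conditions A A⁺ P' A = P' A and P B⁺ B = P. Define the projected updates X := X₀ − (A⁺ P' A) X₀ P and Y := Y₀ − P' Y₀ (B P B⁺). Then A X + Y B = (A X₀ + Y₀ B) − P' (A X₀ + Y₀ B) P. In particular, the dual-sided locally projected gradients realize the globally projected update W̃ − P' W̃ P with W̃ := A X₀ + Y₀ B. (Theorem 2, local gradient projection achieves the global null-space projection.) -/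
open Matrix

/-- **Theorem 2 (local gradient projection achieves the global null-space projection).**
With `A A⁺ A = A`, `B B⁺ B = B`, and the range conditions `A A⁺ P' A = P' A`,
`P B⁺ B = P`, the dual-sided locally projected updates
`X = X₀ − (A⁺ P' A) X₀ P` and `Y = Y₀ − P' Y₀ (B P B⁺)` satisfy
`A X + Y B = W̃ − P' W̃ P` where `W̃ = A X₀ + Y₀ B`. -/
theorem local_projection_realizes_global_projection
    {m k l n : ℕ}
    (A : Matrix (Fin m) (Fin k) ℝ) (B : Matrix (Fin l) (Fin n) ℝ)
    (X₀ : Matrix (Fin k) (Fin n) ℝ) (Y₀ : Matrix (Fin m) (Fin l) ℝ)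
    (P : Matrix (Fin n) (Fin n) ℝ) (P' : Matrix (Fin m) (Fin m) ℝ)
    (Ap : Matrix (Fin k) (Fin m) ℝ) (Bp : Matrix (Fin n) (Fin l) ℝ)
    (hA : A * Ap * A = A) (hB : B * Bp * B = B)
    (hrangeA : A * Ap * P' * A = P' * A)
    (hrangeB : P * Bp * B = P) :
    A * (X₀ - (Ap * P' * A) * X₀ * P) + (Y₀ - P' * Y₀ * (B * P * Bp)) * B
      = (A * X₀ + Y₀ * B) - P' * (A * X₀ + Y₀ * B) * P := by
  have h1 : A * ((Ap * P' * A) * X₀ * P) = P' * (A * X₀) * P := by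
    simp only [← Matrix.mul_assoc, hrangeA]
  have h2 : P' * Y₀ * (B * P * Bp) * B = P' * (Y₀ * B) * P := by
    simp only [Matrix.mul_assoc]
    simp only [← Matrix.mul_assoc, hrangeB]
  rw [Matrix.mul_sub, Matrix.sub_mul, h1, h2, Matrix.mul_add, Matrix.add_mul]
  abel
end

section
/- Let Z' be a real d×n' matrix, Z a real d×n matrix, W₁, W₂, G₁, G₂, P, P', P̃, P̃' real d×d matrices, and η a real number. Assume each of P, P', P̃, P̃' has L2 operator norm at most 1. Define the projected gradients ΔW₁ := G₁ − P̃ G₁ P' and ΔW₂ := G₂ − P̃' G₂ P, and assume the first-order cross term vanishes: Z'ᵀ (W₁ᵀ ΔW₂ + ΔW₁ᵀ W₂) Z = 0. Then the deviation of the alignment scores after the updates W₁ − η ΔW₁ and W₂ − η ΔW₂ satisfies ‖ Z'ᵀ (W₁ − η ΔW₁)ᵀ (W₂ − η ΔW₂) Z − Z'ᵀ W₁ᵀ W₂ Z ‖₂ ≤ η² · ‖Z'‖₂ · ‖Z‖₂ · ( 2‖G₁‖₂‖G₂‖₂ + ‖G₁‖₂² + ‖G₂‖₂² ). (Theorem 3,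 upper bound on the loss of stability.) -/
/-!
Expanding the product, the term of order `η` in the deviation of the alignment scores is
`η` times the cross term, which vanishes; what remains is `η² Z'ᵀ ΔW₁ᵀ ΔW₂ Z`. Since the
projectors are contractions, `‖ΔWᵢ‖ ≤ 2‖Gᵢ‖`, so submultiplicativity bounds this by
`4η² ‖Z'‖ ‖Z‖ ‖G₁‖ ‖G₂‖`, and `4ab ≤ 2ab + a² + b²` gives the claim.
-/

open Matrix
open scoped Matrix.Norms.L2Operator

lemma norm_mul_mul_le_of_norm_le_one {R : Type*} [NonUnitalSeminormedRing R] {a b : R}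
    (g : R) (ha : ‖a‖ ≤ 1) (hb : ‖b‖ ≤ 1) : ‖a * g * b‖ ≤ ‖g‖ :=
  calc ‖a * g * b‖ ≤ ‖a‖ * ‖g‖ * ‖b‖ := norm_mul₃_le
    _ ≤ 1 * ‖g‖ * 1 := by gcongr
    _ = ‖g‖ := by ring

lemma norm_sub_mul_mul_le_two_mul {R : Type*} [NonUnitalSeminormedRing R] {a b : R}
    (g : R) (ha : ‖a‖ ≤ 1) (hb : ‖b‖ ≤ 1) : ‖g - a * g * b‖ ≤ 2 * ‖g‖ :=
  (norm_sub_le _ _).trans (by linarith [norm_mul_mul_le_of_norm_le_one g ha hb])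

namespace Matrix

variable {α : Type*} {k l p q r : Type*} [Fintype k]

lemma transpose_sub_smul_mul_sub_smul_sub [CommRing α] (A C : Matrix k l α)
    (B D : Matrix k q α) (η : α) :
    (A - η • C)ᵀ * (B - η • D) - Aᵀ * B = η ^ 2 • (Cᵀ * D) - η • (Aᵀ * D + Cᵀ * B) := by
  simp only [transpose_sub, transpose_smul, Matrix.sub_mul, Matrix.mul_sub, Matrix.smul_mul,
    Matrix.mul_smul]
  module

variable [Fintype l] [Fintype q]

lemma transpose_mul_transpose_sub_smul_mul_sub_smul_mul_sub [CommRing α] (X : Matrix l p α)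
    (A C : Matrix k l α) (B D : Matrix k q α) (Y : Matrix q r α) (η : α)
    (hcross : Xᵀ * (Aᵀ * D + Cᵀ * B) * Y = 0) :
    Xᵀ * (A - η • C)ᵀ * (B - η • D) * Y - Xᵀ * Aᵀ * B * Y = η ^ 2 • (Xᵀ * Cᵀ * D * Y) :=
  calc Xᵀ * (A - η • C)ᵀ * (B - η • D) * Y - Xᵀ * Aᵀ * B * Y
      = Xᵀ * ((A - η • C)ᵀ * (B - η • D) - Aᵀ * B) * Y := by
        simp only [Matrix.mul_sub, Matrix.sub_mul, Matrix.mul_assoc]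
    _ = Xᵀ * (η ^ 2 • (Cᵀ * D) - η • (Aᵀ * D + Cᵀ * B)) * Y := by
        rw [transpose_sub_smul_mul_sub_smul_sub]
    _ = η ^ 2 • (Xᵀ * Cᵀ * D * Y) - η • (Xᵀ * (Aᵀ * D + Cᵀ * B) * Y) := by
        simp only [Matrix.mul_sub, Matrix.sub_mul, Matrix.mul_smul, Matrix.smul_mul,
          Matrix.mul_assoc]
    _ = η ^ 2 • (Xᵀ * Cᵀ * D * Y) := by rw [hcross, smul_zero, sub_zero]

variable [Fintype p] [Fintype r] [DecidableEq k] [DecidableEq l] [DecidableEq p]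
  [DecidableEq q] [DecidableEq r]

lemma l2_opNorm_transpose (A : Matrix k l ℝ) : ‖Aᵀ‖ = ‖A‖ := by
  rw [← conjTranspose_eq_transpose_of_trivial, l2_opNorm_conjTranspose]

lemma l2_opNorm_transpose_mul_transpose_mul_mul_le (X : Matrix l p ℝ) (C : Matrix k l ℝ)
    (D : Matrix k q ℝ) (Y : Matrix q r ℝ) :
    ‖Xᵀ * Cᵀ * D * Y‖ ≤ ‖X‖ * ‖C‖ * ‖D‖ * ‖Y‖ := by
  rw [← l2_opNorm_transpose X, ← l2_opNorm_transpose C]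
  calc ‖Xᵀ * Cᵀ * D * Y‖ ≤ ‖Xᵀ * Cᵀ * D‖ * ‖Y‖ := l2_opNorm_mul _ _
    _ ≤ ‖Xᵀ * Cᵀ‖ * ‖D‖ * ‖Y‖ := by gcongr; exact l2_opNorm_mul _ _
    _ ≤ ‖Xᵀ‖ * ‖Cᵀ‖ * ‖D‖ * ‖Y‖ := by gcongr; exact l2_opNorm_mul _ _

end Matrix

/-- **Theorem 3 (upper bound on the loss of stability).**
Under the dual-sided gradient projection `ΔW₁ = G₁ − Ptil G₁ P'`, `ΔW₂ = G₂ − Ptil' G₂ P`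
(with all projectors of spectral norm at most 1), assuming the first-order cross term
vanishes, the deviation of the alignment scores after updating `W₁ ← W₁ − η ΔW₁` and
`W₂ ← W₂ − η ΔW₂` is bounded by
`η² ‖Z'‖₂ ‖Z‖₂ (2‖G₁‖₂‖G₂‖₂ + ‖G₁‖₂² + ‖G₂‖₂²)`. -/
theorem upper_bound_loss_of_stability
    {d n' n : ℕ}
    (Z' : Matrix (Fin d) (Fin n') ℝ) (Z : Matrix (Fin d) (Fin n) ℝ)
    (W₁ W₂ G₁ G₂ P P' Ptil Ptil' : Matrix (Fin d) (Fin d) ℝ) (η : ℝ)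
    (hP : ‖P‖ ≤ 1) (hP' : ‖P'‖ ≤ 1) (hPtil : ‖Ptil‖ ≤ 1) (hPtil' : ‖Ptil'‖ ≤ 1)
    (hcross :
      Z'ᵀ * (W₁ᵀ * (G₂ - Ptil' * G₂ * P) + (G₁ - Ptil * G₁ * P')ᵀ * W₂) * Z = 0) :
    ‖Z'ᵀ * (W₁ - η • (G₁ - Ptil * G₁ * P'))ᵀ * (W₂ - η • (G₂ - Ptil' * G₂ * P)) * Z
        - Z'ᵀ * W₁ᵀ * W₂ * Z‖
      ≤ η ^ 2 * ‖Z'‖ * ‖Z‖ *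
          (2 * ‖G₁‖ * ‖G₂‖ + ‖G₁‖ ^ 2 + ‖G₂‖ ^ 2) := by
  set ΔW₁ := G₁ - Ptil * G₁ * P'
  set ΔW₂ := G₂ - Ptil' * G₂ * P
  have hΔW₁ : ‖ΔW₁‖ ≤ 2 * ‖G₁‖ := norm_sub_mul_mul_le_two_mul G₁ hPtil hP'
  have hΔW₂ : ‖ΔW₂‖ ≤ 2 * ‖G₂‖ := norm_sub_mul_mul_le_two_mul G₂ hPtil' hP
  have hamgm : 2 * ‖G₁‖ * (2 * ‖G₂‖) ≤ 2 * ‖G₁‖ * ‖G₂‖ + ‖G₁‖ ^ 2 + ‖G₂‖ ^ 2 := by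
    nlinarith [sq_nonneg (‖G₁‖ - ‖G₂‖)]
  rw [transpose_mul_transpose_sub_smul_mul_sub_smul_mul_sub Z' W₁ ΔW₁ W₂ ΔW₂ Z η hcross,
    norm_smul, Real.norm_eq_abs, abs_sq]
  calc η ^ 2 * ‖Z'ᵀ * ΔW₁ᵀ * ΔW₂ * Z‖
      ≤ η ^ 2 * (‖Z'‖ * ‖ΔW₁‖ * ‖ΔW₂‖ * ‖Z‖) := by
        gcongr; exact l2_opNorm_transpose_mul_transpose_mul_mul_le _ _ _ _
    _ ≤ η ^ 2 * (‖Z'‖ * (2 * ‖G₁‖) * (2 * ‖G₂‖) * ‖Z‖) := by gcongr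
    _ = η ^ 2 * ‖Z'‖ * ‖Z‖ * (2 * ‖G₁‖ * (2 * ‖G₂‖)) := by ring
    _ ≤ η ^ 2 * ‖Z'‖ * ‖Z‖ * (2 * ‖G₁‖ * ‖G₂‖ + ‖G₁‖ ^ 2 + ‖G₂‖ ^ 2) := by gcongr
end

section
/- Let G₁, G₂ be real d×d matrices and let P, P', P̃, P̃' be real d×d orthogonal projectors, i.e. symmetric and idempotent. Define the projected gradients ΔW₁ := G₁ − P̃ G₁ P' and ΔW₂ := G₂ − P̃' G₂ P. Then the first-order descent term is nonnegative: ⟨G₁, ΔW₁⟩_F + ⟨G₂, ΔW₂⟩_F ≥ 0, where ⟨A, B⟩_F = trace(Aᵀ B) is the Frobenius inner product. (Key inequality in Theorem 4: gradient projection does not destroy plasticity, since the loss change satisfies L_t − L_{t−1} = −η(⟨G₁,ΔW₁⟩ + ⟨G₂,ΔW₂⟩) + o(η) ≤ 0 for small η.) -/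
open Matrix

/-- The Frobenius inner product of two real matrices: `⟨A, B⟩_F = trace (Aᵀ B)`. -/
noncomputable def frobInner {a b : ℕ}
    (A B : Matrix (Fin a) (Fin b) ℝ) : ℝ :=
  (Aᵀ * B).trace

lemma frobInner_self_nonneg {a b : ℕ} (A : Matrix (Fin a) (Fin b) ℝ) :
    0 ≤ frobInner A A := by
  unfold frobInner
  rw [Matrix.trace]
  refine Finset.sum_nonneg fun j _ => ?_
  simp only [Matrix.diag_apply, Matrix.mul_apply, Matrix.transpose_apply]
  exact Finset.sum_nonneg fun i _ => mul_self_nonneg _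

lemma proj_term_nonneg {d : ℕ} (G Q Q' : Matrix (Fin d) (Fin d) ℝ)
    (hQs : Qᵀ = Q) (hQi : Q * Q = Q)
    (hQ's : Q'ᵀ = Q') (hQ'i : Q' * Q' = Q') :
    0 ≤ frobInner G (G - Q * G * Q') := by
  have key : frobInner G (G - Q * G * Q')
      = frobInner (G - Q * G * Q') (G - Q * G * Q') := by
    unfold frobInner
    have h1 : ((Q * G * Q')ᵀ * G).trace = ((Q * G * Q')ᵀ * (Q * G * Q')).trace := by
      simp only [Matrix.transpose_mul, hQs, hQ's]
      have e : Q' * (Gᵀ * Q) * (Q * G * Q') = (Q' * (Gᵀ * Q) * G) * Q' := by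
        rw [show Q' * (Gᵀ * Q) * (Q * G * Q') = Q' * Gᵀ * (Q * Q) * G * Q' by
          noncomm_ring, hQi]
        noncomm_ring
      rw [e, Matrix.trace_mul_comm (Q' * (Gᵀ * Q) * G) Q',
        show Q' * (Q' * (Gᵀ * Q) * G) = (Q' * Q') * (Gᵀ * Q) * G by noncomm_ring, hQ'i]
    have expand : (G - Q * G * Q')ᵀ * (G - Q * G * Q')
        = Gᵀ * (G - Q * G * Q') - ((Q * G * Q')ᵀ * G - (Q * G * Q')ᵀ * (Q * G * Q')) := by
      simp only [Matrix.transpose_sub]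
      noncomm_ring
    rw [expand, Matrix.trace_sub, Matrix.trace_sub, h1]
    ring
  rw [key]
  exact frobInner_self_nonneg _

/-- **Key inequality in Theorem 4 (plasticity).** For orthogonal projectors
`P, P', Ptil, Ptil'` and gradients `G₁, G₂`, the first-order descent term for the projected
gradients `ΔW₁ = G₁ − Ptil G₁ P'` and `ΔW₂ = G₂ − Ptil' G₂ P` is nonnegative:
`⟨G₁, ΔW₁⟩_F + ⟨G₂, ΔW₂⟩_F ≥ 0`. -/
theorem first_order_descent_term_nonneg
    {d : ℕ} (G₁ G₂ P P' Ptil Ptil' : Matrix (Fin d) (Fin d) ℝ)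
    (hPsymm : Pᵀ = P) (hPidem : P * P = P)
    (hP'symm : P'ᵀ = P') (hP'idem : P' * P' = P')
    (hPtilsymm : Ptilᵀ = Ptil) (hPtilidem : Ptil * Ptil = Ptil)
    (hPtil'symm : Ptil'ᵀ = Ptil') (hPtil'idem : Ptil' * Ptil' = Ptil') :
    0 ≤ frobInner G₁ (G₁ - Ptil * G₁ * P') + frobInner G₂ (G₂ - Ptil' * G₂ * P) := by
  have h1 := proj_term_nonneg G₁ Ptil P' hPtilsymm hPtilidem hP'symm hP'idem
  have h2 := proj_term_nonneg G₂ Ptil' P hPtil'symm hPtil'idem hPsymm hPidem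
  linarith
end

section
/- Let A be a real m×k matrix, B a real l×n matrix, and C a real m×n matrix. Let A⁺ (k×m) and B⁺ (n×l) satisfy the Moore–Penrose equations A A⁺ A = A, A⁺ A A⁺ = A⁺, (A A⁺)ᵀ = A A⁺, (A⁺ A)ᵀ = A⁺ A, and likewise for B and B⁺. Then the matrix equation A X + Y B = C has a solution (X a k×n matrix, Y an m×l matrix) if and only if (I − A A⁺) C (I − B⁺ B) = 0, where I denotes the identity matrix of the appropriate size. (Lemma on solving AX + YB = C.) -/
open Matrix

/-- **Lemma on solving `A X + Y B = C`.** With `A⁺`, `B⁺` Moore–Penrose pseudoinverses of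
`A`, `B`, the equation `A X + Y B = C` has a solution if and only if
`(I − A A⁺) C (I − B⁺ B) = 0`. -/
theorem solvable_AX_add_YB_eq_C_iff
    {m k l n : ℕ}
    (A : Matrix (Fin m) (Fin k) ℝ) (B : Matrix (Fin l) (Fin n) ℝ)
    (C : Matrix (Fin m) (Fin n) ℝ)
    (Ap : Matrix (Fin k) (Fin m) ℝ) (Bp : Matrix (Fin n) (Fin l) ℝ)
    (hA1 : A * Ap * A = A) (hA2 : Ap * A * Ap = Ap)
    (hA3 : (A * Ap)ᵀ = A * Ap) (hA4 : (Ap * A)ᵀ = Ap * A)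
    (hB1 : B * Bp * B = B) (hB2 : Bp * B * Bp = Bp)
    (hB3 : (B * Bp)ᵀ = B * Bp) (hB4 : (Bp * B)ᵀ = Bp * B) :
    (∃ (X : Matrix (Fin k) (Fin n) ℝ) (Y : Matrix (Fin m) (Fin l) ℝ),
        A * X + Y * B = C) ↔
      (1 - A * Ap) * C * (1 - Bp * B) = 0 := by
  constructor
  · rintro ⟨X, Y, rfl⟩
    have h1 : (1 - A * Ap) * A = 0 := by
      rw [Matrix.sub_mul, Matrix.one_mul, Matrix.mul_assoc, ← Matrix.mul_assoc, hA1, sub_self]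
    have h2 : B * (1 - Bp * B) = 0 := by
      rw [Matrix.mul_sub, Matrix.mul_one, ← Matrix.mul_assoc, hB1, sub_self]
    calc (1 - A * Ap) * (A * X + Y * B) * (1 - Bp * B)
        = ((1 - A * Ap) * A) * (X * (1 - Bp * B)) + ((1 - A * Ap) * Y) * (B * (1 - Bp * B)) := by
          rw [Matrix.mul_add, Matrix.add_mul]
          simp only [Matrix.mul_assoc]
      _ = 0 := by rw [h1, h2, Matrix.zero_mul, Matrix.mul_zero, add_zero]
  · intro h
    refine ⟨Ap * C, (C - A * Ap * C) * Bp, ?_⟩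
    have hexp : C - A * Ap * C - C * (Bp * B) + A * Ap * C * (Bp * B) = 0 := by
      have := h
      rw [Matrix.sub_mul, Matrix.one_mul, Matrix.sub_mul, Matrix.mul_sub, Matrix.mul_sub,
        Matrix.mul_one, Matrix.mul_one] at this
      calc C - A * Ap * C - C * (Bp * B) + A * Ap * C * (Bp * B)
          = C - A * Ap * C - (C * (Bp * B) - A * Ap * C * (Bp * B)) := by abel
        _ = C - C * (Bp * B) - (A * Ap * C - A * Ap * C * (Bp * B)) := by abel
        _ = 0 := this
    have : A * (Ap * C) + (C - A * Ap * C) * Bp * B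
        = C - (C - A * Ap * C - C * (Bp * B) + A * Ap * C * (Bp * B)) := by
      rw [Matrix.sub_mul, Matrix.sub_mul]
      simp only [Matrix.mul_assoc]
      abel
    rw [this, hexp, sub_zero]
end

section
/- Let A be a real m×k matrix, B a real l×n matrix, and C a real m×n matrix. Let A⁺ (k×m) and B⁺ (n×l) satisfy the Moore–Penrose equations A A⁺ A = A, A⁺ A A⁺ = A⁺, (A A⁺)ᵀ = A A⁺, (A⁺ A)ᵀ = A⁺ A, and likewise for B and B⁺. Assume (I − A A⁺) C (I − B⁺ B) = 0. Then for every k×n matrix M and every m×l matrix N, the matrices X := A⁺ C + A⁺ N B + (I − A⁺ A) M and Y := (I − A A⁺) C B⁺ − N + (I − A A⁺) N B B⁺ satisfy A X + Y B = C. (General solution family for AX + YB = C.) -/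
open Matrix

/-- **General solution family for `A X + Y B = C`.** With `A⁺`, `B⁺` Moore–Penrose
pseudoinverses of `A`, `B`, and assuming `(I − A A⁺) C (I − B⁺ B) = 0`, for all `M`, `N` the
matrices `X = A⁺ C + A⁺ N B + (I − A⁺ A) M` and
`Y = (I − A A⁺) C B⁺ − N + (I − A A⁺) N B B⁺` satisfy `A X + Y B = C`. -/
theorem general_solution_AX_add_YB_eq_C
    {m k l n : ℕ}
    (A : Matrix (Fin m) (Fin k) ℝ) (B : Matrix (Fin l) (Fin n) ℝ)
    (C : Matrix (Fin m) (Fin n) ℝ)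
    (Ap : Matrix (Fin k) (Fin m) ℝ) (Bp : Matrix (Fin n) (Fin l) ℝ)
    (hA1 : A * Ap * A = A) (hA2 : Ap * A * Ap = Ap)
    (hA3 : (A * Ap)ᵀ = A * Ap) (hA4 : (Ap * A)ᵀ = Ap * A)
    (hB1 : B * Bp * B = B) (hB2 : Bp * B * Bp = Bp)
    (hB3 : (B * Bp)ᵀ = B * Bp) (hB4 : (Bp * B)ᵀ = Bp * B)
    (hcond : (1 - A * Ap) * C * (1 - Bp * B) = 0) :
    ∀ (M : Matrix (Fin k) (Fin n) ℝ) (N : Matrix (Fin m) (Fin l) ℝ),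
      A * (Ap * C + Ap * N * B + (1 - Ap * A) * M)
        + ((1 - A * Ap) * C * Bp - N + (1 - A * Ap) * N * (B * Bp)) * B = C := by
  intro M N
  have h0 : A * ((1 - Ap * A) * M) = 0 := by
    rw [← Matrix.mul_assoc, Matrix.mul_sub, Matrix.mul_one, ← Matrix.mul_assoc, hA1,
      sub_self, Matrix.zero_mul]
  rw [Matrix.mul_sub, Matrix.mul_one] at hcond
  have h2 := sub_eq_zero.mp hcond
  have hkey : A * Ap * C + (1 - A * Ap) * C * (Bp * B) = C := by
    rw [← h2, Matrix.sub_mul, Matrix.one_mul]; abel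
  have h3 : (1 - A * Ap) * N * (B * Bp) * B = (1 - A * Ap) * N * B := by
    rw [Matrix.mul_assoc ((1 - A * Ap) * N) (B * Bp) B, hB1]
  calc A * (Ap * C + Ap * N * B + (1 - Ap * A) * M)
        + ((1 - A * Ap) * C * Bp - N + (1 - A * Ap) * N * (B * Bp)) * B
      = A * (Ap * C) + A * (Ap * N * B) + A * ((1 - Ap * A) * M)
        + ((1 - A * Ap) * C * Bp * B - N * B + (1 - A * Ap) * N * (B * Bp) * B) := by
        rw [Matrix.mul_add, Matrix.mul_add, Matrix.add_mul, Matrix.sub_mul, Matrix.sub_mul]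
    _ = A * Ap * C + A * Ap * (N * B) + 0
        + ((1 - A * Ap) * C * (Bp * B) - N * B + (1 - A * Ap) * N * B) := by
        rw [h0, h3, ← Matrix.mul_assoc A Ap C,
          ← Matrix.mul_assoc A (Ap * N) B, ← Matrix.mul_assoc A Ap N,
          Matrix.mul_assoc (A * Ap) N B,
          Matrix.mul_assoc ((1 - A * Ap) * C) Bp B]
    _ = (A * Ap * C + (1 - A * Ap) * C * (Bp * B))
        + (A * Ap * (N * B) - N * B + (1 - A * Ap) * (N * B)) := by
        rw [← Matrix.mul_assoc (1 - A * Ap) N B]; abel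
    _ = C := by rw [hkey, Matrix.sub_mul, Matrix.one_mul]; abel
end

section
/- Let A be a real m×k matrix, B a real l×n matrix, and C a real m×n matrix. Let A⁺ (k×m) and B⁺ (n×l) satisfy the Moore–Penrose equations A A⁺ A = A, A⁺ A A⁺ = A⁺, (A A⁺)ᵀ = A A⁺, (A⁺ A)ᵀ = A⁺ A, and likewise for B and B⁺. Then the matrix equation A X B = C has a solution X (a k×l matrix) if and only if A A⁺ C B⁺ B = C. (Penrose's solvability criterion for AXB = C.) -/
open Matrix

/-- **Penrose's solvability criterion for `A X B = C`.** With `A⁺`, `B⁺` Moore–Penrose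
pseudoinverses of `A`, `B`, the equation `A X B = C` has a solution if and only if
`A A⁺ C B⁺ B = C`. -/
theorem solvable_AXB_eq_C_iff
    {m k l n : ℕ}
    (A : Matrix (Fin m) (Fin k) ℝ) (B : Matrix (Fin l) (Fin n) ℝ)
    (C : Matrix (Fin m) (Fin n) ℝ)
    (Ap : Matrix (Fin k) (Fin m) ℝ) (Bp : Matrix (Fin n) (Fin l) ℝ)
    (hA1 : A * Ap * A = A) (hA2 : Ap * A * Ap = Ap)
    (hA3 : (A * Ap)ᵀ = A * Ap) (hA4 : (Ap * A)ᵀ = Ap * A)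
    (hB1 : B * Bp * B = B) (hB2 : Bp * B * Bp = Bp)
    (hB3 : (B * Bp)ᵀ = B * Bp) (hB4 : (Bp * B)ᵀ = Bp * B) :
    (∃ X : Matrix (Fin k) (Fin l) ℝ, A * X * B = C) ↔
      A * Ap * C * (Bp * B) = C := by
  constructor
  · rintro ⟨X, rfl⟩
    calc A * Ap * (A * X * B) * (Bp * B)
        = (A * Ap * A) * X * (B * Bp * B) := by simp only [Matrix.mul_assoc]
      _ = A * X * B := by rw [hA1, hB1]
  · intro h
    refine ⟨Ap * C * Bp, ?_⟩
    conv_lhs => rw [← h]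
    rw [show A * (Ap * (A * Ap * C * (Bp * B)) * Bp) * B
        = (A * Ap * A) * Ap * C * (Bp * B * Bp * B) from by
      simp only [Matrix.mul_assoc], hA1, hB2]
    exact h
end

section
/- Let A be a real m×k matrix, B a real l×n matrix, and C a real m×n matrix. Let A⁺ (k×m) and B⁺ (n×l) satisfy the Moore–Penrose equations A A⁺ A = A, A⁺ A A⁺ = A⁺, (A A⁺)ᵀ = A A⁺, (A⁺ A)ᵀ = A⁺ A, and likewise for B and B⁺. Assume A A⁺ C B⁺ B = C. Then a k×l matrix X satisfies A X B = C if and only if there exists a k×l matrix Y with X = A⁺ C B⁺ + Y − A⁺ A Y B B⁺. (General-solution characterization for AXB = C.) -/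
open Matrix

/-- **General-solution characterization for `A X B = C`.** With `A⁺`, `B⁺` Moore–Penrose
pseudoinverses of `A`, `B`, and assuming `A A⁺ C B⁺ B = C`, a matrix `X` satisfies
`A X B = C` if and only if `X = A⁺ C B⁺ + Y − A⁺ A Y B B⁺` for some `Y`. -/
theorem general_solution_AXB_eq_C
    {m k l n : ℕ}
    (A : Matrix (Fin m) (Fin k) ℝ) (B : Matrix (Fin l) (Fin n) ℝ)
    (C : Matrix (Fin m) (Fin n) ℝ)
    (Ap : Matrix (Fin k) (Fin m) ℝ) (Bp : Matrix (Fin n) (Fin l) ℝ)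
    (hA1 : A * Ap * A = A) (hA2 : Ap * A * Ap = Ap)
    (hA3 : (A * Ap)ᵀ = A * Ap) (hA4 : (Ap * A)ᵀ = Ap * A)
    (hB1 : B * Bp * B = B) (hB2 : Bp * B * Bp = Bp)
    (hB3 : (B * Bp)ᵀ = B * Bp) (hB4 : (Bp * B)ᵀ = Bp * B)
    (hcond : A * Ap * C * (Bp * B) = C) :
    ∀ X : Matrix (Fin k) (Fin l) ℝ,
      A * X * B = C ↔
        ∃ Y : Matrix (Fin k) (Fin l) ℝ,
          X = Ap * C * Bp + Y - Ap * A * Y * (B * Bp) := by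
  intro X
  constructor
  · intro h
    refine ⟨X, ?_⟩
    have key : Ap * A * X * (B * Bp) = Ap * C * Bp := by
      rw [← h]; simp only [Matrix.mul_assoc]
    rw [key]; abel
  · rintro ⟨Y, rfl⟩
    have h1 : A * (Ap * C * Bp) * B = C := by
      calc A * (Ap * C * Bp) * B = A * Ap * C * (Bp * B) := by
            simp only [Matrix.mul_assoc]
        _ = C := hcond
    have h2 : A * (Ap * A * Y * (B * Bp)) * B = A * Y * B := by
      calc A * (Ap * A * Y * (B * Bp)) * B
          = (A * Ap * A) * Y * (B * Bp * B) := by simp only [Matrix.mul_assoc]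
        _ = A * Y * B := by rw [hA1, hB1]
    calc A * (Ap * C * Bp + Y - Ap * A * Y * (B * Bp)) * B
        = A * (Ap * C * Bp) * B + A * Y * B - A * (Ap * A * Y * (B * Bp)) * B := by
          simp only [Matrix.mul_add, Matrix.mul_sub, Matrix.add_mul, Matrix.sub_mul]
      _ = C := by rw [h1, h2]; abel
end

section
/- Let A be a real m×k matrix, B a real l×n matrix, and C a real m×n matrix. Let A⁺ (k×m) and B⁺ (n×l) satisfy the Moore–Penrose equations A A⁺ A = A, A⁺ A A⁺ = A⁺, (A A⁺)ᵀ = A A⁺, (A⁺ A)ᵀ = A⁺ A, and likewise for B and B⁺. Then the matrix equation A X − Y B = C has a solution (X a k×n matrix, Y an m×l matrix) if and only if (I − A A⁺) C (I − B⁺ B) = 0, where I denotes the identity matrix of the appropriate size. (Baksalary–Kala solvability criterion for AX − YB = C.) -/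
open Matrix

/-- **Baksalary–Kala solvability criterion for `A X − Y B = C`.** With `A⁺`, `B⁺`
Moore–Penrose pseudoinverses of `A`, `B`, the equation `A X − Y B = C` has a solution if
and only if `(I − A A⁺) C (I − B⁺ B) = 0`. -/
theorem solvable_AX_sub_YB_eq_C_iff
    {m k l n : ℕ}
    (A : Matrix (Fin m) (Fin k) ℝ) (B : Matrix (Fin l) (Fin n) ℝ)
    (C : Matrix (Fin m) (Fin n) ℝ)
    (Ap : Matrix (Fin k) (Fin m) ℝ) (Bp : Matrix (Fin n) (Fin l) ℝ)
    (hA1 : A * Ap * A = A) (hA2 : Ap * A * Ap = Ap)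
    (hA3 : (A * Ap)ᵀ = A * Ap) (hA4 : (Ap * A)ᵀ = Ap * A)
    (hB1 : B * Bp * B = B) (hB2 : Bp * B * Bp = Bp)
    (hB3 : (B * Bp)ᵀ = B * Bp) (hB4 : (Bp * B)ᵀ = Bp * B) :
    (∃ (X : Matrix (Fin k) (Fin n) ℝ) (Y : Matrix (Fin m) (Fin l) ℝ),
        A * X - Y * B = C) ↔
      (1 - A * Ap) * C * (1 - Bp * B) = 0 := by
  constructor
  · rintro ⟨X, Y, rfl⟩
    have h1 : (1 - A * Ap) * A = 0 := by
      simp [Matrix.sub_mul, Matrix.mul_assoc, hA1]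
    have h2 : B * (1 - Bp * B) = 0 := by
      simp [Matrix.mul_sub, ← Matrix.mul_assoc, hB1]
    calc (1 - A * Ap) * (A * X - Y * B) * (1 - Bp * B)
        = ((1 - A * Ap) * A) * (X * (1 - Bp * B))
          - ((1 - A * Ap) * Y) * (B * (1 - Bp * B)) := by
          simp only [Matrix.mul_sub, Matrix.sub_mul, Matrix.mul_assoc]
          abel
      _ = 0 := by rw [h1, h2]; simp
  · intro h
    have h' : (1 - A * Ap) * C * (Bp * B) = (1 - A * Ap) * C := by
      rw [Matrix.mul_sub, Matrix.mul_one, sub_eq_zero] at h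
      exact h.symm
    refine ⟨Ap * C, -((1 - A * Ap) * C * Bp), ?_⟩
    have key : A * (Ap * C) - (-((1 - A * Ap) * C * Bp)) * B
        = A * Ap * C + (1 - A * Ap) * C * (Bp * B) := by
      rw [Matrix.neg_mul, sub_neg_eq_add, Matrix.mul_assoc ((1 - A * Ap) * C) Bp B,
        ← Matrix.mul_assoc A Ap C]
    rw [key, h', Matrix.sub_mul, Matrix.one_mul]
    abel
end
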